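/- Suppose an $F$-linear map $K:V_{l,x}\to V^*_{l,x^{-1}}$ satisfies $K\circ a=a\circ K$ where $a$ ranges over $e_i,f_i,k_i^{\pm1}$ for every $i\in I_\bullet$ (on the left $a$ acts on $V_{l,x}$ with parameter $x$, on the right on $V^*_{l,x^{-1}}$ with parameter $x^{-1}$). Then there exist scalars $c_\alpha\in F$ ($\alpha\in B_l$) such that $Kv_\alpha=c_\alpha\,v^*_{\sigma^{(\varepsilon)}(\alpha)}$ for every $\alpha\in B_l$, and $c_\alpha = x^{2\delta_{i,0}}\,c_{\alpha+\mathbf{e}_i-\mathbf{e}_{i+1}}$ for every $i\in I_\bullet$ and every $\alpha\in B_l$ with $\alpha+\mathbf{e}_i-\mathbf{e}_{i+1}\in B_l$. -/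

import Mathlib

/- Common setup: the quantum affine algebra U_q(A^{(1)}_{2n-1}) acting on symmetric
tensor representations V_{l,x} and their duals, coideal operators b_i, tensor products,
and the K matrix, following Kusano-Okado. -/

noncomputable section
namespace AII

open scoped TensorProduct Classical
open Finset

/-- The base field F = ℚ(q). -/
abbrev F : Type := RatFunc ℚ

/-- The quantum parameter q. -/
def qq : F := RatFunc.X

/-- Quantum integer [a] = (q^a - q^{-a})/(q - q⁻¹). -/
def qint (a : ℤ) : F := (qq ^ a - qq ^ (-a)) / (qq - qq⁻¹)

/-- Quantum factorial [a]!. -/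
def qfact (a : ℕ) : F := ∏ k ∈ Finset.range a, qint (k + 1)

/-- Quantum binomial coefficient. -/
def qbinom (j p : ℕ) : F := qfact j / (qfact p * qfact (j - p))

instance (n : ℕ) [NeZero n] : NeZero (2 * n) := ⟨by have := NeZero.ne n; omega⟩

/-- Helper instance: zero of a tensor product (works around a stuck instance search). -/
noncomputable instance {R M N : Type*} [CommSemiring R] [AddCommMonoid M] [Module R M]
    [AddCommMonoid N] [Module R N] : Zero (TensorProduct R M N) :=
  (inferInstance : AddCommMonoid (TensorProduct R M N)).toZero

/-- Index set ℤ/2n for nodes of the Dynkin diagram / entries of weight vectors. -/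
abbrev Zn (n : ℕ) := ZMod (2 * n)

/-- Membership in B_l : all entries nonnegative and summing to l. -/
def inB (n : ℕ) [NeZero n] (l : ℕ) (α : Zn n → ℤ) : Prop :=
  (∀ i, 0 ≤ α i) ∧ (∑ i, α i) = (l : ℤ)

/-- The vector space V_{l} with basis indexed by B_l. -/
abbrev V (n : ℕ) [NeZero n] (l : ℕ) := {α : Zn n → ℤ // inB n l α} →₀ F

/-- Basis vector v_α, with the convention that it is 0 if α ∉ B_l
(in particular if α has a negative entry). -/
def vB (n : ℕ) [NeZero n] (l : ℕ) (α : Zn n → ℤ) : V n l :=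
  if h : inB n l α then Finsupp.single ⟨α, h⟩ 1 else 0

/-- Helper: the linear operator sending v_α ↦ c(α) • v_{sh(α)}. -/
def opOf (n : ℕ) [NeZero n] (l : ℕ) (c : (Zn n → ℤ) → F)
    (sh : (Zn n → ℤ) → (Zn n → ℤ)) : V n l →ₗ[F] V n l :=
  Finsupp.lsum F fun a => LinearMap.toSpanSingleton F (V n l) (c a.1 • vB n l (sh a.1))

/-- The i-th standard unit vector e_i of ℤ^{2n}. -/
def eu (n : ℕ) [NeZero n] (i : Zn n) : Zn n → ℤ := fun j => if j = i then 1 else 0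

/-- Chevalley generator e_i on V_{l,x}. -/
def eOp (n : ℕ) [NeZero n] (l : ℕ) (x : F) (i : Zn n) : V n l →ₗ[F] V n l :=
  opOf n l (fun α => (if i = 0 then x else 1) * qint (α (i + 1)))
    (fun α => α + eu n i - eu n (i + 1))

/-- Chevalley generator f_i on V_{l,x}. -/
def fOp (n : ℕ) [NeZero n] (l : ℕ) (x : F) (i : Zn n) : V n l →ₗ[F] V n l :=
  opOf n l (fun α => (if i = 0 then x⁻¹ else 1) * qint (α i))
    (fun α => α - eu n i + eu n (i + 1))

/-- Cartan generator k_i on V_{l,x}. -/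
def kOp (n : ℕ) [NeZero n] (l : ℕ) (i : Zn n) : V n l →ₗ[F] V n l :=
  opOf n l (fun α => qq ^ (α i - α (i + 1))) id

/-- Inverse Cartan generator k_i⁻¹ on V_{l,x}. -/
def kInvOp (n : ℕ) [NeZero n] (l : ℕ) (i : Zn n) : V n l →ₗ[F] V n l :=
  opOf n l (fun α => qq ^ (-(α i - α (i + 1)))) id

/-- e_i on the dual representation V^*_{l,x}. -/
def eSOp (n : ℕ) [NeZero n] (l : ℕ) (x : F) (i : Zn n) : V n l →ₗ[F] V n l :=
  opOf n l (fun α => (if i = 0 then x else 1) * qint (α i))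
    (fun α => α - eu n i + eu n (i + 1))

/-- f_i on the dual representation V^*_{l,x}. -/
def fSOp (n : ℕ) [NeZero n] (l : ℕ) (x : F) (i : Zn n) : V n l →ₗ[F] V n l :=
  opOf n l (fun α => (if i = 0 then x⁻¹ else 1) * qint (α (i + 1)))
    (fun α => α + eu n i - eu n (i + 1))

/-- k_i on the dual representation V^*_{l,x}. -/
def kSOp (n : ℕ) [NeZero n] (l : ℕ) (i : Zn n) : V n l →ₗ[F] V n l :=
  opOf n l (fun α => qq ^ (-(α i - α (i + 1)))) id

/-- k_i⁻¹ on the dual representation V^*_{l,x}. -/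
def kSInvOp (n : ℕ) [NeZero n] (l : ℕ) (i : Zn n) : V n l →ₗ[F] V n l :=
  opOf n l (fun α => qq ^ (α i - α (i + 1))) id

/-- The coideal generator b_i built from families of operators e, f, k⁻¹:
b_i = f_i + γ_i (e_{i+1}e_{i-1}e_i - q⁻¹(e_{i+1}e_ie_{i-1}+e_{i-1}e_ie_{i+1})
  + q⁻²e_ie_{i-1}e_{i+1}) k_i⁻¹. -/
def bOf (n : ℕ) [NeZero n] {M : Type*} [AddCommMonoid M] [Module F M]
    (e f kinv : Zn n → (M →ₗ[F] M)) (γ : Zn n → F) (i : Zn n) : M →ₗ[F] M :=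
  f i + γ i • ((e (i + 1) ∘ₗ e (i - 1) ∘ₗ e i
      + (-qq⁻¹) • (e (i + 1) ∘ₗ e i ∘ₗ e (i - 1) + e (i - 1) ∘ₗ e i ∘ₗ e (i + 1))
      + (qq ^ (-2 : ℤ)) • (e i ∘ₗ e (i - 1) ∘ₗ e (i + 1))) ∘ₗ kinv i)

/-- b_i on V_{l,x}. -/
def bOp (n : ℕ) [NeZero n] (l : ℕ) (x : F) (γ : Zn n → F) (i : Zn n) :
    V n l →ₗ[F] V n l :=
  bOf n (fun j => eOp n l x j) (fun j => fOp n l x j) (fun j => kInvOp n l j) γ i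

/-- b_i on V^*_{l,x}. -/
def bSOp (n : ℕ) [NeZero n] (l : ℕ) (x : F) (γ : Zn n → F) (i : Zn n) :
    V n l →ₗ[F] V n l :=
  bOf n (fun j => eSOp n l x j) (fun j => fSOp n l x j) (fun j => kSInvOp n l j) γ i

/-- Coproduct action of e: E = e ⊗ 1 + k ⊗ e. -/
def coE {M N : Type*} [AddCommGroup M] [Module F M] [AddCommGroup N] [Module F N]
    (e1 k1 : M →ₗ[F] M) (e2 : N →ₗ[F] N) : M ⊗[F] N →ₗ[F] M ⊗[F] N :=
  TensorProduct.map e1 LinearMap.id + TensorProduct.map k1 e2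

/-- Coproduct action of f: F = f ⊗ k⁻¹ + 1 ⊗ f. -/
def coF {M N : Type*} [AddCommGroup M] [Module F M] [AddCommGroup N] [Module F N]
    (f1 : M →ₗ[F] M) (kinv2 f2 : N →ₗ[F] N) : M ⊗[F] N →ₗ[F] M ⊗[F] N :=
  TensorProduct.map f1 kinv2 + TensorProduct.map LinearMap.id f2

/-- Coproduct action of k^{±1}: K = k ⊗ k. -/
def coK {M N : Type*} [AddCommGroup M] [Module F M] [AddCommGroup N] [Module F N]
    (k1 : M →ₗ[F] M) (k2 : N →ₗ[F] N) : M ⊗[F] N →ₗ[F] M ⊗[F] N :=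
  TensorProduct.map k1 k2

/-- A bundle of operator families (e_i, f_i, k_i, k_i⁻¹) on a module. -/
structure Ops (n : ℕ) [NeZero n] (M : Type*) [AddCommGroup M] [Module F M] where
  e : Zn n → M →ₗ[F] M
  f : Zn n → M →ₗ[F] M
  k : Zn n → M →ₗ[F] M
  kinv : Zn n → M →ₗ[F] M

/-- The operator bundle of V_{l,x}. -/
def VOps (n : ℕ) [NeZero n] (l : ℕ) (x : F) : Ops n (V n l) :=
  ⟨fun i => eOp n l x i, fun i => fOp n l x i, fun i => kOp n l i, fun i => kInvOp n l i⟩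

/-- The operator bundle of V^*_{l,x}. -/
def VSOps (n : ℕ) [NeZero n] (l : ℕ) (x : F) : Ops n (V n l) :=
  ⟨fun i => eSOp n l x i, fun i => fSOp n l x i, fun i => kSOp n l i, fun i => kSInvOp n l i⟩

/-- Coproduct operator bundle on a tensor product of two representations. -/
def tensorOps {n : ℕ} [NeZero n] {M N : Type*} [AddCommGroup M] [Module F M]
    [AddCommGroup N] [Module F N] (A : Ops n M) (B : Ops n N) : Ops n (M ⊗[F] N) where
  e := fun i => coE (A.e i) (A.k i) (B.e i)
  f := fun i => coF (A.f i) (B.kinv i) (B.f i)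
  k := fun i => coK (A.k i) (B.k i)
  kinv := fun i => coK (A.kinv i) (B.kinv i)

/-- R intertwines the bundles A and B: R ∘ a = a ∘ R for all generators. -/
def Intertwines {n : ℕ} [NeZero n] {M N : Type*} [AddCommGroup M] [Module F M]
    [AddCommGroup N] [Module F N] (A : Ops n M) (B : Ops n N) (R : M →ₗ[F] N) : Prop :=
  ∀ i : Zn n, R ∘ₗ A.e i = B.e i ∘ₗ R ∧ R ∘ₗ A.f i = B.f i ∘ₗ R ∧
    R ∘ₗ A.k i = B.k i ∘ₗ R ∧ R ∘ₗ A.kinv i = B.kinv i ∘ₗ R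

/-- E_i on V_{l,x} ⊗ V_{m,y}. -/
def tE (n : ℕ) [NeZero n] (l m : ℕ) (x y : F) (i : Zn n) :
    V n l ⊗[F] V n m →ₗ[F] V n l ⊗[F] V n m := (tensorOps (VOps n l x) (VOps n m y)).e i

/-- F_i on V_{l,x} ⊗ V_{m,y}. -/
def tF (n : ℕ) [NeZero n] (l m : ℕ) (x y : F) (i : Zn n) :
    V n l ⊗[F] V n m →ₗ[F] V n l ⊗[F] V n m := (tensorOps (VOps n l x) (VOps n m y)).f i

/-- K_i on V_{l,x} ⊗ V_{m,y}. -/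
def tK (n : ℕ) [NeZero n] (l m : ℕ) (x y : F) (i : Zn n) :
    V n l ⊗[F] V n m →ₗ[F] V n l ⊗[F] V n m := (tensorOps (VOps n l x) (VOps n m y)).k i

/-- K_i⁻¹ on V_{l,x} ⊗ V_{m,y}. -/
def tKInv (n : ℕ) [NeZero n] (l m : ℕ) (x y : F) (i : Zn n) :
    V n l ⊗[F] V n m →ₗ[F] V n l ⊗[F] V n m := (tensorOps (VOps n l x) (VOps n m y)).kinv i

/-- B_i on V_{l,x} ⊗ V_{m,y}. -/
def tB (n : ℕ) [NeZero n] (l m : ℕ) (x y : F) (γ : Zn n → F) (i : Zn n) :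
    V n l ⊗[F] V n m →ₗ[F] V n l ⊗[F] V n m :=
  bOf n (fun j => tE n l m x y j) (fun j => tF n l m x y j) (fun j => tKInv n l m x y j) γ i

/-- The entry permutation σ^{(ε)}: switches α_{i-1} and α_i whenever i ≡ ε (mod 2),
i.e. pairs {ε+2k-1, ε+2k}. -/
def sigmaPerm (n : ℕ) [NeZero n] (ε : ℕ) (j : Zn n) : Zn n :=
  if (j - (ε : Zn n)).val % 2 = 1 then j + 1 else j - 1

/-- Action of σ^{(ε)} on entry vectors. -/
def sigmaAct (n : ℕ) [NeZero n] (ε : ℕ) (α : Zn n → ℤ) : Zn n → ℤ :=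
  fun j => α (sigmaPerm n ε j)

/-- The coefficient of the K matrix:
x^{ε(α_1-α_{2n})} ∏_{j=ε,ε+2,…,ε+2n-2} (-q⁻¹γ_j)^{-∑_{i=ε+1}^{j} α_i}. -/
def Kcoef (n : ℕ) [NeZero n] (x : F) (γ : Zn n → F) (ε : ℕ) (α : Zn n → ℤ) : F :=
  x ^ ((ε : ℤ) * (α 1 - α 0)) *
    ∏ k ∈ Finset.range n,
      (-qq⁻¹ * γ ((ε : Zn n) + 2 * (k : Zn n))) ^
        (-(∑ r ∈ Finset.range (2 * k), α ((ε : Zn n) + 1 + (r : Zn n))))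

/-- The explicit K matrix K(x) : V_{l,x} → V^*_{l,x⁻¹},
v_α ↦ Kcoef(α) v^*_{σ^{(ε)}(α)}. -/
def Kmap (n : ℕ) [NeZero n] (l : ℕ) (x : F) (γ : Zn n → F) (ε : ℕ) :
    V n l →ₗ[F] V n l :=
  opOf n l (fun α => Kcoef n x γ ε α) (sigmaAct n ε)

/-- The simplified K matrix (for γ_j = -q): v_α ↦ x^{ε(α_1-α_{2n})} v^*_{σ^{(ε)}(α)}. -/
def KmapS (n : ℕ) [NeZero n] (l : ℕ) (x : F) (ε : ℕ) : V n l →ₗ[F] V n l :=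
  opOf n l (fun α => x ^ ((ε : ℤ) * (α 1 - α 0))) (sigmaAct n ε)

/-- Cartan matrix of A^{(1)}_{2n-1}: a_{ij} = 2δ_{ij} - δ_{i,j+1} - δ_{i,j-1}. -/
def cartan (n : ℕ) [NeZero n] (i j : Zn n) : ℤ :=
  (if i = j then 2 else 0) - (if i = j + 1 then 1 else 0) - (if i = j - 1 then 1 else 0)

/- ### sl2 representations U_l -/

/-- The (l+1)-dimensional irreducible U_q(sl_2)-module U_l. -/
abbrev UL (l : ℕ) := {p : ℕ × ℕ // p.1 + p.2 = l} →₀ F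

/-- Basis vector u_{(a,b)} of U_l, zero when out of range. -/
def uB (l : ℕ) (a b : ℤ) : UL l :=
  if h : 0 ≤ a ∧ 0 ≤ b ∧ a.toNat + b.toNat = l then Finsupp.single ⟨(a.toNat, b.toNat), h.2.2⟩ 1
  else 0

/-- Helper for sl2 operators. -/
def slOf (l : ℕ) (c : ℕ × ℕ → F) (sh : ℕ × ℕ → ℤ × ℤ) : UL l →ₗ[F] UL l :=
  Finsupp.lsum F fun a => LinearMap.toSpanSingleton F (UL l) (c a.1 • uB l (sh a.1).1 (sh a.1).2)

/-- e on U_l : u_{(a,b)} ↦ [b]u_{(a+1,b-1)}. -/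
def esl (l : ℕ) : UL l →ₗ[F] UL l :=
  slOf l (fun p => qint p.2) (fun p => ((p.1 : ℤ) + 1, (p.2 : ℤ) - 1))

/-- f on U_l : u_{(a,b)} ↦ [a]u_{(a-1,b+1)}. -/
def fsl (l : ℕ) : UL l →ₗ[F] UL l :=
  slOf l (fun p => qint p.1) (fun p => ((p.1 : ℤ) - 1, (p.2 : ℤ) + 1))

/-- k on U_l. -/
def ksl (l : ℕ) : UL l →ₗ[F] UL l :=
  slOf l (fun p => qq ^ ((p.1 : ℤ) - (p.2 : ℤ))) (fun p => ((p.1 : ℤ), (p.2 : ℤ)))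

/-- k⁻¹ on U_l. -/
def kslInv (l : ℕ) : UL l →ₗ[F] UL l :=
  slOf l (fun p => qq ^ (-((p.1 : ℤ) - (p.2 : ℤ)))) (fun p => ((p.1 : ℤ), (p.2 : ℤ)))

/-- The highest weight vector w^{(l,m)}_j of U_{l+m-2j} ⊂ U_l ⊗ U_m. -/
def wsl (l m j : ℕ) : UL l ⊗[F] UL m :=
  ∑ p ∈ Finset.range (j + 1),
    ((-1 : F) ^ p * qq ^ ((p : ℤ) * ((l : ℤ) - p + 1)) * qbinom j p) •
      (uB l ((l : ℤ) - p) p ⊗ₜ[F] uB m ((m : ℤ) - j + p) ((j : ℤ) - p))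

/- ### The U(I_•)-highest weight vectors of V_l ⊗ V_m -/

open Fin.NatCast in
/-- The index t ∈ {1,…,n} (0-based, in Fin n) of the sl2-pair containing
the entry position i : the pairs are {2t-1, 2t}. -/
def pairIdx (n : ℕ) [NeZero n] (i : Zn n) : Fin n :=
  if i.val % 2 = 1 then ((i.val / 2 : ℕ) : Fin n) else (((i.val + 2 * n - 2) / 2 : ℕ) : Fin n)

/-- The entry vector α with α_{2t-1} = l_t - p_t, α_{2t} = p_t. -/
def alphaOf (n : ℕ) [NeZero n] (bl : Fin n → ℤ) (p : Fin n → ℕ) : Zn n → ℤ :=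
  fun i => if i.val % 2 = 1 then bl (pairIdx n i) - p (pairIdx n i) else (p (pairIdx n i) : ℤ)

/-- The entry vector β with β_{2t-1} = m_t - j_t + p_t, β_{2t} = j_t - p_t. -/
def betaOf (n : ℕ) [NeZero n] (bm bj : Fin n → ℤ) (p : Fin n → ℕ) : Zn n → ℤ :=
  fun i => if i.val % 2 = 1 then bm (pairIdx n i) - bj (pairIdx n i) + p (pairIdx n i)
    else bj (pairIdx n i) - p (pairIdx n i)

/-- Admissibility of a triple (𝒍, 𝒎, 𝒋). -/
def adm (n : ℕ) [NeZero n] (l m : ℕ) (bl bm bj : Fin n → ℤ) : Prop :=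
  (∀ t, 0 ≤ bl t) ∧ (∀ t, 0 ≤ bm t) ∧ (∑ t, bl t) = (l : ℤ) ∧ (∑ t, bm t) = (m : ℤ) ∧
    (∀ t, 0 ≤ bj t ∧ bj t ≤ min (bl t) (bm t))

/-- The U(I_•)-highest weight vector 𝒘^{(𝒍,𝒎)}_𝒋 ∈ V_{l,1} ⊗ V_{m,1},
zero when the triple is not admissible. -/
def wbig (n : ℕ) [NeZero n] (l m : ℕ) (bl bm bj : Fin n → ℤ) : V n l ⊗[F] V n m :=
  if adm n l m bl bm bj then
    ∑ p ∈ Fintype.piFinset (fun t => Finset.range ((bj t).toNat + 1)),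
      (∏ t, ((-1 : F) ^ (p t) * qq ^ ((p t : ℤ) * (bl t - p t + 1)) * qbinom (bj t).toNat (p t))) •
        (vB n l (alphaOf n bl p) ⊗ₜ[F] vB n m (betaOf n bm bj p))
  else (0 : V n l ⊗[F] V n m)

/-- The s-th standard unit vector of ℤ^n. -/
def eun (n : ℕ) [NeZero n] (s : Fin n) : Fin n → ℤ := fun t => if t = s then 1 else 0

/-- The Dynkin index i = 2s ∈ ℤ/2n attached to s ∈ {1,…,n} (s 0-based in Fin n). -/
def iZ (n : ℕ) [NeZero n] (s : Fin n) : Zn n := ((2 * s.val + 2 : ℕ) : Zn n)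

/- ### Coefficients from Propositions 4.3–4.5 -/


def cD1 (n : ℕ) [NeZero n] (bl bm bj : Fin n → ℤ) (s : Fin n) : F := -(qq ^ (-(bj s) - bj (s+1) + bl s + bm (s+1) + 1) * qint (bj s))
def cD2 (n : ℕ) [NeZero n] (bl bm bj : Fin n → ℤ) (s : Fin n) : F := qint (bj s)
def cD3 (n : ℕ) [NeZero n] (bl bm bj : Fin n → ℤ) (s : Fin n) : F := -(qq ^ (-(bj s) - bj (s+1) + bl (s+1) + bm (s+1) + 1) * qint (bj (s+1)))
def cD4 (n : ℕ) [NeZero n] (bl bm bj : Fin n → ℤ) (s : Fin n) : F := qq ^ (-2 * bj s - 2 * bj (s+1) + bl s + bl (s+1) + 2 * bm (s+1) + 2) * qint (bj (s+1))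

def cB1 (n : ℕ) [NeZero n] (bl bm bj : Fin n → ℤ) (s : Fin n) : F := qq ^ (bj s - bj (s+1) - bm s + bm (s+1)) * qint (bl s - bj s)
def cB2 (n : ℕ) [NeZero n] (bl bm bj : Fin n → ℤ) (s : Fin n) : F := qint (bm s - bj s)
def cB3 (n : ℕ) [NeZero n] (bl bm bj : Fin n → ℤ) (s : Fin n) : F := -(qq ^ (bj s - bj (s+1) - bl s - bm s + bl (s+1) + bm (s+1)) * qint (bm s - bj s))
def cB4 (n : ℕ) [NeZero n] (bl bm bj : Fin n → ℤ) (s : Fin n) : F := -(qq ^ (2 * bj s - 2 * bj (s+1) - bl s - 2 * bm s + bl (s+1) + 2 * bm (s+1)) * qint (bl s - bj s))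

def cC1 (n : ℕ) [NeZero n] (bl bm bj : Fin n → ℤ) (s : Fin n) : F := -(qq ^ (-(bj s) + bj (s+1) + bl s - bl (s+1)) * qint (bm (s+1) - bj (s+1)))
def cC2 (n : ℕ) [NeZero n] (bl bm bj : Fin n → ℤ) (s : Fin n) : F := -qint (bl (s+1) - bj (s+1))
def cC3 (n : ℕ) [NeZero n] (bl bm bj : Fin n → ℤ) (s : Fin n) : F := qq ^ (-(bj s) + bj (s+1)) * qint (bl (s+1) - bj (s+1))
def cC4 (n : ℕ) [NeZero n] (bl bm bj : Fin n → ℤ) (s : Fin n) : F := qq ^ (-2 * bj s + 2 * bj (s+1) + bl s - bl (s+1)) * qint (bm (s+1) - bj (s+1))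

/-- The denominator N = [l_s+m_s-2j_s+1][l_{s+1}+m_{s+1}-2j_{s+1}+1]. -/
def cN (n : ℕ) [NeZero n] (bl bm bj : Fin n → ℤ) (s : Fin n) : F := qint (bl s + bm s - 2 * bj s + 1) * qint (bl (s+1) + bm (s+1) - 2 * bj (s+1) + 1)


/-- A_1 as a function of the six integers l_s, l_{s+1}, m_s, m_{s+1}, j_s, j_{s+1}. -/
def sA1 (ls ls1 ms ms1 js js1 : ℤ) : F :=
  qq ^ (js + js1 - ls1 - ms - 1) * qint (ls - js) * qint (ms1 - js1) * qint (ls + ms - js + 1)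
    / (qint (ls + ms - 2 * js + 1) * qint (ls1 + ms1 - 2 * js1 + 1))

def sA2 (ls ls1 ms ms1 js js1 : ℤ) : F :=
  -(qint (ls1 - js1) * qint (ms - js) * qint (ls + ms - js + 1))
    / (qint (ls + ms - 2 * js + 1) * qint (ls1 + ms1 - 2 * js1 + 1))

def sA3 (ls ls1 ms ms1 js js1 : ℤ) : F :=
  qq ^ (js + js1 - ls - ms - 1) * qint (ls1 - js1) * qint (ms - js) * qint (ls1 + ms1 - js1 + 1)
    / (qint (ls + ms - 2 * js + 1) * qint (ls1 + ms1 - 2 * js1 + 1))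

def sA4 (ls ls1 ms ms1 js js1 : ℤ) : F :=
  -(qq ^ (2 * js + 2 * js1 - ls - ls1 - 2 * ms - 2) * qint (ls - js) * qint (ms1 - js1)
      * qint (ls1 + ms1 - js1 + 1))
    / (qint (ls + ms - 2 * js + 1) * qint (ls1 + ms1 - 2 * js1 + 1))


def cA1 (n : ℕ) [NeZero n] (bl bm bj : Fin n → ℤ) (s : Fin n) : F := sA1 (bl s) (bl (s+1)) (bm s) (bm (s+1)) (bj s) (bj (s+1))
def cA2 (n : ℕ) [NeZero n] (bl bm bj : Fin n → ℤ) (s : Fin n) : F := sA2 (bl s) (bl (s+1)) (bm s) (bm (s+1)) (bj s) (bj (s+1))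
def cA3 (n : ℕ) [NeZero n] (bl bm bj : Fin n → ℤ) (s : Fin n) : F := sA3 (bl s) (bl (s+1)) (bm s) (bm (s+1)) (bj s) (bj (s+1))
def cA4 (n : ℕ) [NeZero n] (bl bm bj : Fin n → ℤ) (s : Fin n) : F := sA4 (bl s) (bl (s+1)) (bm s) (bm (s+1)) (bj s) (bj (s+1))

def cBB1 (n : ℕ) [NeZero n] (bl bm bj : Fin n → ℤ) (s : Fin n) : F := cB1 n bl bm bj s * qint (bl s + bm s - bj s + 1)
  * qint (bl (s+1) + bm (s+1) - 2 * bj (s+1)) / cN n bl bm bj s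
def cBB2 (n : ℕ) [NeZero n] (bl bm bj : Fin n → ℤ) (s : Fin n) : F := cB2 n bl bm bj s * qint (bl s + bm s - bj s + 1)
  * qint (bl (s+1) + bm (s+1) - 2 * bj (s+1)) / cN n bl bm bj s
def cBB3 (n : ℕ) [NeZero n] (bl bm bj : Fin n → ℤ) (s : Fin n) : F := cB3 n bl bm bj s * qint (bj (s+1))
  * qint (bl (s+1) + bm (s+1) - 2 * bj (s+1)) / cN n bl bm bj s
def cBB4 (n : ℕ) [NeZero n] (bl bm bj : Fin n → ℤ) (s : Fin n) : F := cB4 n bl bm bj s * qint (bj (s+1))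
  * qint (bl (s+1) + bm (s+1) - 2 * bj (s+1)) / cN n bl bm bj s

def cCC1 (n : ℕ) [NeZero n] (bl bm bj : Fin n → ℤ) (s : Fin n) : F := cC1 n bl bm bj s * qint (bj s) * qint (bl s + bm s - 2 * bj s) / cN n bl bm bj s
def cCC2 (n : ℕ) [NeZero n] (bl bm bj : Fin n → ℤ) (s : Fin n) : F := cC2 n bl bm bj s * qint (bj s) * qint (bl s + bm s - 2 * bj s) / cN n bl bm bj s
def cCC3 (n : ℕ) [NeZero n] (bl bm bj : Fin n → ℤ) (s : Fin n) : F := cC3 n bl bm bj s * qint (bl s + bm s - 2 * bj s)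
  * qint (bl (s+1) + bm (s+1) - bj (s+1) + 1) / cN n bl bm bj s
def cCC4 (n : ℕ) [NeZero n] (bl bm bj : Fin n → ℤ) (s : Fin n) : F := cC4 n bl bm bj s * qint (bl s + bm s - 2 * bj s)
  * qint (bl (s+1) + bm (s+1) - bj (s+1) + 1) / cN n bl bm bj s

def cDD1 (n : ℕ) [NeZero n] (bl bm bj : Fin n → ℤ) (s : Fin n) : F := cD1 n bl bm bj s * qint (bl s + bm s - 2 * bj s)
  * qint (bl (s+1) + bm (s+1) - 2 * bj (s+1)) / cN n bl bm bj s
def cDD2 (n : ℕ) [NeZero n] (bl bm bj : Fin n → ℤ) (s : Fin n) : F := cD2 n bl bm bj s * qint (bl s + bm s - 2 * bj s)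
  * qint (bl (s+1) + bm (s+1) - 2 * bj (s+1)) / cN n bl bm bj s
def cDD3 (n : ℕ) [NeZero n] (bl bm bj : Fin n → ℤ) (s : Fin n) : F := cD3 n bl bm bj s * qint (bl s + bm s - 2 * bj s)
  * qint (bl (s+1) + bm (s+1) - 2 * bj (s+1)) / cN n bl bm bj s
def cDD4 (n : ℕ) [NeZero n] (bl bm bj : Fin n → ℤ) (s : Fin n) : F := cD4 n bl bm bj s * qint (bl s + bm s - 2 * bj s)
  * qint (bl (s+1) + bm (s+1) - 2 * bj (s+1)) / cN n bl bm bj s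


/-- The entry of the matrix C of Proposition 4.8, for row data (s, 𝒍, 𝒎, 𝒋)
and column data (𝒍', 𝒎', 𝒋'). -/
def Centry (n : ℕ) [NeZero n] (s : Fin n) (bl bm bj bl' bm' bj' : Fin n → ℤ) : F :=
  if bl' = bl - eun n s + eun n (s + 1) ∧ bm' = bm ∧ bj' = bj + eun n (s + 1) then
    cA1 n bl bm bj s
  else if bl' = bl ∧ bm' = bm - eun n s + eun n (s + 1) ∧ bj' = bj + eun n (s + 1) then
    cA2 n bl bm bj s
  else if bl' = bl + eun n s - eun n (s + 1) ∧ bm' = bm ∧ bj' = bj + eun n s then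
    cA3 n bl bm bj s
  else if bl' = bl ∧ bm' = bm + eun n s - eun n (s + 1) ∧ bj' = bj + eun n s then
    cA4 n bl bm bj s
  else 0

/-- f ∈ ℚ(q) is regular at q = 0 and vanishes there (i.e. f ∈ qA). -/
def vanishesAt0 (f : F) : Prop :=
  ∃ a b : Polynomial ℚ, Polynomial.eval 0 b ≠ 0 ∧ Polynomial.eval 0 a = 0 ∧
    f = algebraMap (Polynomial ℚ) F a / algebraMap (Polynomial ℚ) F b

/-! For `i ∈ I_•` the operators `e_i, f_i, k_i` only move the entries `α_i, α_{i+1}`. The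
`k_i`-relation shows that `K v_α` has components only at `β` with
`β_{i+1} - β_i = α_i - α_{i+1}`. Read coefficientwise, the `e_i`-relation transports a nonzero
coefficient at `(α, β)` with `β_i ≠ α_{i+1}` down the `α_i`-string, and at `α_i = 0` the
`f_i`-relation kills it: this is Schur's lemma for the two `U_q(sl_2)`-strings. So `β` agrees with
`σ^{(ε)}(α)` on every pair `{i, i+1}`, and the `e_i`-relation between `α` and
`α + e_i - e_{i+1}` gives the recursion for `c_α`; the factor `x²` comes from `e_0` carrying `x`
on `V_{l,x}` but `x⁻¹` on `V^*_{l,x⁻¹}`. -/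

lemma qq_ne_zero : qq ≠ 0 := RatFunc.X_ne_zero

lemma intDegree_qq_zpow (m : ℤ) : (qq ^ m).intDegree = m := by
  induction m using Int.induction_on with
  | zero => simp
  | succ k ih =>
    rw [zpow_add_one₀ qq_ne_zero, RatFunc.intDegree_mul (zpow_ne_zero _ qq_ne_zero) qq_ne_zero,
      ih, qq, RatFunc.intDegree_X]
  | pred k ih =>
    rw [zpow_sub_one₀ qq_ne_zero,
      RatFunc.intDegree_mul (zpow_ne_zero _ qq_ne_zero) (inv_ne_zero qq_ne_zero), ih,
      RatFunc.intDegree_inv, qq, RatFunc.intDegree_X]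
    ring

lemma qq_zpow_injective : Function.Injective (qq ^ · : ℤ → F) := fun a b h => by
  simpa only [intDegree_qq_zpow] using congrArg RatFunc.intDegree h

lemma qint_eq_zero_iff {m : ℤ} : qint m = 0 ↔ m = 0 := by
  have hden : qq - qq⁻¹ ≠ 0 := by
    rw [sub_ne_zero]
    intro h
    have := @qq_zpow_injective 1 (-1) (by simpa [zpow_neg_one] using h)
    omega
  rw [qint, div_eq_zero_iff, or_iff_left hden, sub_eq_zero, qq_zpow_injective.eq_iff]
  omega

section Indices

variable {n : ℕ} [NeZero n]

lemma val_one_Zn : (1 : Zn n).val = 1 :=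
  ZMod.val_one_eq_one_mod _ ▸ Nat.mod_eq_of_lt (by have := NeZero.ne n; omega)

lemma succ_ne_self (i : Zn n) : i + 1 ≠ i := fun h => by
  simpa [val_one_Zn] using congrArg ZMod.val (add_eq_left.mp h)

lemma val_add_mod_two (a b : Zn n) : (a + b).val % 2 = (a.val + b.val) % 2 := by
  rw [ZMod.val_add, Nat.mod_mod_of_dvd _ (Dvd.intro n rfl)]

lemma val_succ_mod_two_ne (i : Zn n) : (i + 1).val % 2 ≠ i.val % 2 := by
  rw [val_add_mod_two, val_one_Zn]
  omega

lemma sigmaPerm_eq {ε : ℕ} (hε : ε = 0 ∨ ε = 1) (j : Zn n) :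
    sigmaPerm n ε j = if j.val % 2 ≠ ε then j + 1 else j - 1 := by
  have hεval : (ε : Zn n).val = ε := by
    rw [ZMod.val_natCast]
    exact Nat.mod_eq_of_lt (by have := NeZero.ne n; omega)
  have h := val_add_mod_two (j - (ε : Zn n)) ε
  rw [sub_add_cancel, hεval] at h
  unfold sigmaPerm
  congr 1
  apply propext
  omega

variable {ε : ℕ} {i : Zn n}

lemma sigmaPerm_of_bullet (hε : ε = 0 ∨ ε = 1) (hi : i.val % 2 ≠ ε) :
    sigmaPerm n ε i = i + 1 := by
  rw [sigmaPerm_eq hε, if_pos hi]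

lemma sigmaPerm_succ_of_bullet (hε : ε = 0 ∨ ε = 1) (hi : i.val % 2 ≠ ε) :
    sigmaPerm n ε (i + 1) = i := by
  have := val_succ_mod_two_ne i
  rw [sigmaPerm_eq hε, if_neg (by omega), add_sub_cancel_right]

lemma exists_bullet (j : Zn n) : ∃ i : Zn n, i.val % 2 ≠ ε ∧ (j = i ∨ j = i + 1) := by
  by_cases hj : j.val % 2 ≠ ε
  · exact ⟨j, hj, Or.inl rfl⟩
  · have := val_succ_mod_two_ne (j - 1)
    rw [sub_add_cancel] at this
    exact ⟨j - 1, by omega, Or.inr (sub_add_cancel j 1).symm⟩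

lemma sigmaPerm_involutive (hε : ε = 0 ∨ ε = 1) : Function.Involutive (sigmaPerm n ε) := by
  intro j
  obtain ⟨i, hi, rfl | rfl⟩ := exists_bullet (ε := ε) j
  · rw [sigmaPerm_of_bullet hε hi, sigmaPerm_succ_of_bullet hε hi]
  · rw [sigmaPerm_succ_of_bullet hε hi, sigmaPerm_of_bullet hε hi]

lemma eq_sigmaAct_of_swap (hε : ε = 0 ∨ ε = 1) {α β : Zn n → ℤ}
    (h : ∀ i : Zn n, i.val % 2 ≠ ε → β i = α (i + 1) ∧ β (i + 1) = α i) :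
    β = sigmaAct n ε α := by
  funext j
  obtain ⟨i, hi, hj | hj⟩ := exists_bullet (ε := ε) j <;> subst j
  · rw [sigmaAct, sigmaPerm_of_bullet hε hi, (h i hi).1]
  · rw [sigmaAct, sigmaPerm_succ_of_bullet hε hi, (h i hi).2]

@[simp] lemma eu_apply_self (i : Zn n) : eu n i i = 1 := if_pos rfl

@[simp] lemma eu_succ_apply (i : Zn n) : eu n (i + 1) i = 0 := if_neg (succ_ne_self i).symm

@[simp] lemma eu_apply_succ (i : Zn n) : eu n i (i + 1) = 0 := if_neg (succ_ne_self i)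

lemma sigmaAct_eu (hε : ε = 0 ∨ ε = 1) (k : Zn n) :
    sigmaAct n ε (eu n k) = eu n (sigmaPerm n ε k) := by
  funext j
  simp only [sigmaAct, eu, (sigmaPerm_involutive hε).eq_iff]

lemma sigmaAct_add_eu_sub_eu (hε : ε = 0 ∨ ε = 1) (hi : i.val % 2 ≠ ε) (α : Zn n → ℤ) :
    sigmaAct n ε (α + eu n i - eu n (i + 1)) = sigmaAct n ε α - eu n i + eu n (i + 1) := by
  change sigmaAct n ε α + sigmaAct n ε (eu n i) - sigmaAct n ε (eu n (i + 1)) = _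
  rw [sigmaAct_eu hε, sigmaAct_eu hε, sigmaPerm_of_bullet hε hi, sigmaPerm_succ_of_bullet hε hi]
  abel

end Indices

section Compositions

variable {n l : ℕ} [NeZero n] {α : Zn n → ℤ}

lemma inB_sigmaAct {ε : ℕ} (hε : ε = 0 ∨ ε = 1) (hα : inB n l α) : inB n l (sigmaAct n ε α) :=
  ⟨fun _ => hα.1 _, (Equiv.sum_comp (sigmaPerm_involutive hε).toPerm α).trans hα.2⟩

lemma inB_add_eu_sub_eu (hα : inB n l α) (j : Zn n) {k : Zn n} (hk : 0 < α k) :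
    inB n l (α + eu n j - eu n k) := by
  refine ⟨fun m => ?_, ?_⟩
  · have := hα.1 m
    simp only [Pi.add_apply, Pi.sub_apply, eu]
    split_ifs <;> subst_vars <;> omega
  · simp [Finset.sum_add_distrib, Finset.sum_sub_distrib, eu, hα.2]

end Compositions

section Coordinates

variable {n l : ℕ} [NeZero n]

def coord (β : Zn n → ℤ) : V n l →ₗ[F] F :=
  if h : inB n l β then Finsupp.lapply ⟨β, h⟩ else 0

lemma coord_of_not_inB {β : Zn n → ℤ} (hβ : ¬ inB n l β) (v : V n l) : coord β v = 0 := by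
  simp [coord, hβ]

lemma coord_single (β : Zn n → ℤ) (a : {α // inB n l α}) (r : F) :
    coord β (Finsupp.single a r) = if a.1 = β then r else 0 := by
  by_cases hβ : inB n l β
  · simp [coord, hβ, Finsupp.single_apply, Subtype.ext_iff]
  · rw [coord_of_not_inB hβ, if_neg (fun h : a.1 = β => hβ (h ▸ a.2))]

lemma coord_vB {α β : Zn n → ℤ} (hβ : inB n l β) :
    coord β (vB n l α) = if α = β then 1 else 0 := by
  by_cases hα : inB n l α
  · rw [vB, dif_pos hα, coord_single]
  · rw [vB, dif_neg hα, map_zero, if_neg (fun h : α = β => hα (h ▸ hβ))]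

lemma ext_coord {v w : V n l} (h : ∀ β, inB n l β → coord β v = coord β w) : v = w :=
  Finsupp.ext fun ⟨β, hβ⟩ => by simpa [coord, hβ] using h β hβ

lemma opOf_vB {c : (Zn n → ℤ) → F} {sh : (Zn n → ℤ) → Zn n → ℤ} {α : Zn n → ℤ}
    (hα : inB n l α) : opOf n l c sh (vB n l α) = c α • vB n l (sh α) := by
  rw [vB, dif_pos hα, opOf, Finsupp.lsum_single, LinearMap.toSpanSingleton_apply, one_smul]

lemma coord_opOf {c : (Zn n → ℤ) → F} {sh : (Zn n → ℤ) → Zn n → ℤ}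
    (hsh : Function.Injective sh) {γ : Zn n → ℤ} (hγ : inB n l (sh γ)) (v : V n l) :
    coord (sh γ) (opOf n l c sh v) = c γ * coord γ v := by
  induction v using Finsupp.induction_linear with
  | zero => simp
  | add v w hv hw => rw [map_add, map_add, hv, hw, map_add, mul_add]
  | single a r =>
    rw [opOf, Finsupp.lsum_single, LinearMap.toSpanSingleton_apply, map_smul, map_smul,
      coord_vB hγ, coord_single]
    by_cases h : a.1 = γ
    · simp [h, mul_comm]
    · simp [h, hsh.ne h]

def matrixCoeff (K : V n l →ₗ[F] V n l) (α β : Zn n → ℤ) : F := coord β (K (vB n l α))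

variable {K : V n l →ₗ[F] V n l}

lemma matrixCoeff_comm_opOf {c c' : (Zn n → ℤ) → F} {sh sh' : (Zn n → ℤ) → Zn n → ℤ}
    (hK : K ∘ₗ opOf n l c sh = opOf n l c' sh' ∘ₗ K) (hsh' : Function.Injective sh')
    {α γ : Zn n → ℤ} (hα : inB n l α) (hγ : inB n l (sh' γ)) :
    c α * matrixCoeff K (sh α) (sh' γ) = c' γ * matrixCoeff K α γ := by
  have h := congrArg (coord (sh' γ)) (LinearMap.congr_fun hK (vB n l α))
  simpa [matrixCoeff, opOf_vB hα, coord_opOf hsh' hγ] using h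

lemma apply_vB_eq_smul_of_matrixCoeff {α γ : Zn n → ℤ} (h : ∀ β, matrixCoeff K α β ≠ 0 → β = γ) :
    K (vB n l α) = matrixCoeff K α γ • vB n l γ := by
  refine ext_coord fun β hβ => ?_
  rw [map_smul, coord_vB hβ, smul_eq_mul]
  by_cases hγβ : γ = β
  · rw [if_pos hγβ, mul_one, hγβ]
    rfl
  · rw [if_neg hγβ, mul_zero]
    exact by_contra fun hd => hγβ (h β hd).symm

end Coordinates

section Intertwiners

variable {n l : ℕ} [NeZero n] {K : V n l →ₗ[F] V n l} {x : F} {i : Zn n} {α β : Zn n → ℤ}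

lemma matrixCoeff_eOp (hK : K ∘ₗ eOp n l x i = eSOp n l x⁻¹ i ∘ₗ K) (hα : inB n l α)
    (hβ : inB n l (β - eu n i + eu n (i + 1))) :
    (if i = 0 then x else 1) * qint (α (i + 1))
        * matrixCoeff K (α + eu n i - eu n (i + 1)) (β - eu n i + eu n (i + 1))
      = (if i = 0 then x⁻¹ else 1) * qint (β i) * matrixCoeff K α β :=
  matrixCoeff_comm_opOf hK (fun _ _ h => by simpa using h) hα hβ

lemma matrixCoeff_fOp (hK : K ∘ₗ fOp n l x i = fSOp n l x⁻¹ i ∘ₗ K) (hα : inB n l α)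
    (hβ : inB n l (β + eu n i - eu n (i + 1))) :
    (if i = 0 then x⁻¹ else 1) * qint (α i)
        * matrixCoeff K (α - eu n i + eu n (i + 1)) (β + eu n i - eu n (i + 1))
      = (if i = 0 then x else 1) * qint (β (i + 1)) * matrixCoeff K α β := by
  simpa only [inv_inv] using matrixCoeff_comm_opOf hK (fun _ _ h => by simpa using h) hα hβ

lemma sub_eq_sub_of_matrixCoeff_ne_zero (hK : K ∘ₗ kOp n l i = kSOp n l i ∘ₗ K)
    (hα : inB n l α) (hβ : inB n l β) (hd : matrixCoeff K α β ≠ 0) :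
    β (i + 1) - β i = α i - α (i + 1) := by
  have h : qq ^ (α i - α (i + 1)) * matrixCoeff K α β
      = qq ^ (-(β i - β (i + 1))) * matrixCoeff K α β :=
    matrixCoeff_comm_opOf (sh := id) (sh' := id) hK Function.injective_id hα hβ
  have := qq_zpow_injective (mul_right_cancel₀ hd h)
  omega

lemma matrixCoeff_eq_zero_of_apply_eq_zero (hx : x ≠ 0)
    (hK : K ∘ₗ fOp n l x i = fSOp n l x⁻¹ i ∘ₗ K) (hα : inB n l α) (hαi : α i = 0)
    (hβi : β (i + 1) ≠ 0) : matrixCoeff K α β = 0 := by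
  by_cases hβ : inB n l β
  swap
  · exact coord_of_not_inB hβ _
  have h := matrixCoeff_fOp hK hα (inB_add_eu_sub_eu hβ i (lt_of_le_of_ne (hβ.1 _) hβi.symm))
  rw [hαi, qint_eq_zero_iff.mpr rfl, mul_zero, zero_mul, eq_comm] at h
  exact (mul_eq_zero.mp h).resolve_left
    (mul_ne_zero (by split_ifs <;> simp [hx]) (qint_eq_zero_iff.not.mpr hβi))

lemma matrixCoeff_eq_zero_of_shift_eq_zero (hx : x ≠ 0)
    (hK : K ∘ₗ eOp n l x i = eSOp n l x⁻¹ i ∘ₗ K) (hα : inB n l α) (hαi : 0 < α i)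
    (h : matrixCoeff K (α - eu n i + eu n (i + 1)) (β + eu n i - eu n (i + 1)) = 0) :
    matrixCoeff K α β = 0 := by
  by_cases hβ : inB n l β
  swap
  · exact coord_of_not_inB hβ _
  have hα' : inB n l (α - eu n i + eu n (i + 1)) :=
    sub_add_eq_add_sub α (eu n i) _ ▸ inB_add_eu_sub_eu hα (i + 1) hαi
  have hα_eq : α - eu n i + eu n (i + 1) + eu n i - eu n (i + 1) = α := by abel
  have hβ_eq : β + eu n i - eu n (i + 1) - eu n i + eu n (i + 1) = β := by abel
  have he := matrixCoeff_eOp hK hα' (β := β + eu n i - eu n (i + 1)) (by rwa [hβ_eq])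
  rw [hα_eq, hβ_eq, h, mul_zero] at he
  have hq : qint ((α - eu n i + eu n (i + 1)) (i + 1)) ≠ 0 := by
    rw [Ne, qint_eq_zero_iff]
    have := hα.1 (i + 1)
    simp only [Pi.add_apply, Pi.sub_apply, eu_apply_self, eu_apply_succ]
    omega
  exact (mul_eq_zero.mp he).resolve_left (mul_ne_zero (by split_ifs <;> simp [hx]) hq)

lemma matrixCoeff_eq_zero_of_apply_ne (hx : x ≠ 0) (hKe : K ∘ₗ eOp n l x i = eSOp n l x⁻¹ i ∘ₗ K)
    (hKf : K ∘ₗ fOp n l x i = fSOp n l x⁻¹ i ∘ₗ K) (hα : inB n l α)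
    (hw : β (i + 1) - β i = α i - α (i + 1)) (hne : β i ≠ α (i + 1)) :
    matrixCoeff K α β = 0 := by
  obtain ⟨k, hk⟩ : ∃ k : ℕ, α i = k := ⟨(α i).toNat, (Int.toNat_of_nonneg (hα.1 i)).symm⟩
  induction k generalizing α β with
  | zero => exact matrixCoeff_eq_zero_of_apply_eq_zero hx hKf hα hk (by omega)
  | succ k ih =>
    have hαi : 0 < α i := by omega
    refine matrixCoeff_eq_zero_of_shift_eq_zero hx hKe hα hαi (ih ?_ ?_ ?_ ?_)
    · exact sub_add_eq_add_sub α (eu n i) _ ▸ inB_add_eu_sub_eu hα (i + 1) hαi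
    all_goals
      simp only [Pi.add_apply, Pi.sub_apply, eu_apply_self, eu_apply_succ, eu_succ_apply]
      omega

lemma apply_eq_of_matrixCoeff_ne_zero (hx : x ≠ 0)
    (hKe : K ∘ₗ eOp n l x i = eSOp n l x⁻¹ i ∘ₗ K)
    (hKf : K ∘ₗ fOp n l x i = fSOp n l x⁻¹ i ∘ₗ K)
    (hKk : K ∘ₗ kOp n l i = kSOp n l i ∘ₗ K) (hα : inB n l α) (hd : matrixCoeff K α β ≠ 0) :
    β i = α (i + 1) ∧ β (i + 1) = α i := by
  have hβ : inB n l β := by_contra fun h => hd (coord_of_not_inB h _)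
  have hw := sub_eq_sub_of_matrixCoeff_ne_zero hKk hα hβ hd
  have hi : β i = α (i + 1) :=
    by_contra fun h => hd (matrixCoeff_eq_zero_of_apply_ne hx hKe hKf hα hw h)
  exact ⟨hi, by omega⟩

lemma matrixCoeff_sigmaAct_eq (hx : x ≠ 0) {ε : ℕ} (hε : ε = 0 ∨ ε = 1) (hi : i.val % 2 ≠ ε)
    (hK : K ∘ₗ eOp n l x i = eSOp n l x⁻¹ i ∘ₗ K) (hα : inB n l α)
    (hα' : inB n l (α + eu n i - eu n (i + 1))) :
    matrixCoeff K α (sigmaAct n ε α)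
      = (if i = 0 then x ^ 2 else 1)
        * matrixCoeff K (α + eu n i - eu n (i + 1))
          (sigmaAct n ε (α + eu n i - eu n (i + 1))) := by
  have h := matrixCoeff_eOp hK hα (β := sigmaAct n ε α)
    (sigmaAct_add_eu_sub_eu hε hi α ▸ inB_sigmaAct hε hα')
  rw [← sigmaAct_add_eu_sub_eu hε hi α, sigmaAct, sigmaPerm_of_bullet hε hi] at h
  have hq : qint (α (i + 1)) ≠ 0 := by
    have := hα'.1 (i + 1)
    simp only [Pi.add_apply, Pi.sub_apply, eu_apply_self, eu_apply_succ] at this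
    exact qint_eq_zero_iff.not.mpr (by omega)
  split_ifs at h ⊢ <;> field_simp at h <;> linear_combination -h

end Intertwiners

theorem statement5_general (n l : ℕ) [NeZero n] (x : F) (hx : x ≠ 0)
    (ε : ℕ) (hε : ε = 0 ∨ ε = 1) (K : V n l →ₗ[F] V n l)
    (hbullet : ∀ i : Zn n, i.val % 2 ≠ ε →
        K ∘ₗ eOp n l x i = eSOp n l x⁻¹ i ∘ₗ K
      ∧ K ∘ₗ fOp n l x i = fSOp n l x⁻¹ i ∘ₗ K
      ∧ K ∘ₗ kOp n l i = kSOp n l i ∘ₗ K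
      ∧ K ∘ₗ kInvOp n l i = kSInvOp n l i ∘ₗ K) :
    ∃ c : (Zn n → ℤ) → F,
      (∀ α : Zn n → ℤ, inB n l α → K (vB n l α) = c α • vB n l (sigmaAct n ε α))
    ∧ (∀ i : Zn n, i.val % 2 ≠ ε → ∀ α : Zn n → ℤ, inB n l α →
        inB n l (α + eu n i - eu n (i + 1)) →
        c α = (if i = 0 then x ^ 2 else 1) * c (α + eu n i - eu n (i + 1))) := by
  refine ⟨fun α => matrixCoeff K α (sigmaAct n ε α), fun α hα => ?_,
    fun i hi α hα hα' => matrixCoeff_sigmaAct_eq hx hε hi (hbullet i hi).1 hα hα'⟩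
  refine apply_vB_eq_smul_of_matrixCoeff fun β hd => eq_sigmaAct_of_swap hε fun i hi => ?_
  obtain ⟨hKe, hKf, hKk, -⟩ := hbullet i hi
  exact apply_eq_of_matrixCoeff_ne_zero hx hKe hKf hKk hα hd

/-- If K : V_{l,x} → V^*_{l,x⁻¹} intertwines e_i, f_i, k_i^{±1} for all
i ∈ I_•, then K v_α = c_α v^*_{σ^{(ε)}(α)} for scalars c_α, and
c_α = x^{2δ_{i,0}} c_{α+e_i-e_{i+1}} whenever both indices lie in B_l. -/
theorem statement5 (n l : ℕ) [NeZero n] (hn : 2 ≤ n) (hl : 1 ≤ l) (x : F) (hx : x ≠ 0)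
    (ε : ℕ) (hε : ε = 0 ∨ ε = 1) (K : V n l →ₗ[F] V n l)
    (hbullet : ∀ i : Zn n, i.val % 2 ≠ ε →
        K ∘ₗ eOp n l x i = eSOp n l x⁻¹ i ∘ₗ K
      ∧ K ∘ₗ fOp n l x i = fSOp n l x⁻¹ i ∘ₗ K
      ∧ K ∘ₗ kOp n l i = kSOp n l i ∘ₗ K
      ∧ K ∘ₗ kInvOp n l i = kSInvOp n l i ∘ₗ K) :
    ∃ c : (Zn n → ℤ) → F,
      (∀ α : Zn n → ℤ, inB n l α → K (vB n l α) = c α • vB n l (sigmaAct n ε α))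
    ∧ (∀ i : Zn n, i.val % 2 ≠ ε → ∀ α : Zn n → ℤ, inB n l α →
        inB n l (α + eu n i - eu n (i + 1)) →
        c α = (if i = 0 then x ^ 2 else 1) * c (α + eu n i - eu n (i + 1))) :=
  statement5_general n l x hx ε hε K hbullet

end AII
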